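/- arXiv:2105.09056 — 2 statements merged into one kernel-verified Lean document; each statement's English description precedes it below -/
import Mathlib

section
/- Let D be a Hermitian Dirac operator with zero diagonal on n vertices whose graph G_D is connected, let Δ(i) denote the degree of vertex i in G_D, let Δ = diag(Δ(1),…,Δ(n)), let Δ(G) = max_i Δ(i) be the maximal degree, and set D_Δ = Δ^{−1/2} D Δ^{−1/2}. Then for all vertices i, j: ℓ^D(i,j) ≤ d^{D_Δ}(i,j) ≤ Δ(G)·d^D(i,j). In particular ℓ^D(i,j)/Δ(G) ≤ d^D(i,j). -/
/-!
The geodesic distance `f = ℓ^D(i, ·)` changes by at most `|D u v|⁻¹` along each edge `{u, v}`, so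
the entries of `[D_Δ, f]` are bounded by `(Δ(u) Δ(v))^{-1/2}` on edges and vanish elsewhere;
Schur's test with the weights `√Δ(u)` then gives `‖[D_Δ, f]‖ ≤ 1`, whence `ℓ^D ≤ d^{D_Δ}`.
Conversely `[D, a] = Δ^{1/2} [D_Δ, a] Δ^{1/2}`, so `‖[D, a]‖ ≤ Δ(G) ‖[D_Δ, a]‖`, which rescales
into `d^{D_Δ} ≤ Δ(G) d^D`. For `i ≠ j`, connectedness makes every degree positive, so that
`Δ^{-1/2}` in `D_Δ` is a genuine inverse square root.
-/

open scoped ENNReal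

/-- The operator norm on square matrices induced by the Euclidean (ℓ²) norm. -/
noncomputable def opNorm {ι : Type*} [Finite ι] (M : Matrix ι ι ℂ) : ℝ :=
  letI := Fintype.ofFinite ι
  letI := Classical.decEq ι
  ‖Matrix.toEuclideanCLM (𝕜 := ℂ) M‖

/-- The commutator `[D, π(a)]` of a matrix with the diagonal matrix of `a`. -/
noncomputable def commD {ι : Type*} [Finite ι] (D : Matrix ι ι ℂ) (a : ι → ℂ) : Matrix ι ι ℂ :=
  letI := Fintype.ofFinite ι
  letI := Classical.decEq ι
  D * Matrix.diagonal a - Matrix.diagonal a * D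

/-- Connes' noncommutative distance associated to the Dirac operator `D`. -/
noncomputable def ncDist {ι : Type*} [Finite ι] (D : Matrix ι ι ℂ) (i j : ι) : ℝ≥0∞ :=
  ⨆ (a : ι → ℂ) (_ : opNorm (commD D a) ≤ 1), ENNReal.ofReal ‖a i - a j‖

/-- The weight of an edge: the inverse of `|D i j|` (infinite if `D i j = 0`). -/
noncomputable def eWeight {ι : Type*} (D : Matrix ι ι ℂ) (u v : ι) : ℝ≥0∞ :=
  (ENNReal.ofReal ‖D u v‖)⁻¹

/-- Adjacency in the graph `G_D`. -/
def Adjac {ι : Type*} (D : Matrix ι ι ℂ) (u v : ι) : Prop := u ≠ v ∧ D u v ≠ 0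

/-- The length of a walk `i :: p` computed with weights `eWeight D`. -/
noncomputable def walkLength {ι : Type*} (D : Matrix ι ι ℂ) : ι → List ι → ℝ≥0∞
  | _, [] => 0
  | u, v :: rest => eWeight D u v + walkLength D v rest

/-- `i :: p` is a walk from `i` to `j` in the graph `G_D`. -/
def IsWalk {ι : Type*} (D : Matrix ι ι ℂ) (i j : ι) (p : List ι) : Prop :=
  List.Chain (Adjac D) i p ∧ (i :: p).getLast (List.cons_ne_nil _ _) = j

/-- `i` and `j` lie in the same connected component of `G_D`. -/
def Conn {ι : Type*} (D : Matrix ι ι ℂ) (i j : ι) : Prop := ∃ p, IsWalk D i j p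

/-- The geodesic (weighted shortest-path) distance on `G_D`. -/
noncomputable def gDist {ι : Type*} (D : Matrix ι ι ℂ) (i j : ι) : ℝ≥0∞ :=
  ⨅ (p : List ι) (_ : IsWalk D i j p), walkLength D i p


/-- The degree of the vertex `i` in the graph `G_D`. -/
noncomputable def degD {n : ℕ} (D : Matrix (Fin n) (Fin n) ℂ) (i : Fin n) : ℕ :=
  letI : DecidablePred (Adjac D i) := Classical.decPred _
  (Finset.univ.filter fun j => Adjac D i j).card

/-- The maximal degree `Δ(G_D)`. -/
noncomputable def maxDeg {n : ℕ} (D : Matrix (Fin n) (Fin n) ℂ) : ℕ :=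
  Finset.univ.sup (degD D)

/-- `D_Δ = Δ^{-1/2} D Δ^{-1/2}` where `Δ` is the diagonal matrix of degrees. -/
noncomputable def DDelta {n : ℕ} (D : Matrix (Fin n) (Fin n) ℂ) : Matrix (Fin n) (Fin n) ℂ :=
  Matrix.diagonal (fun i => (((Real.sqrt (degD D i))⁻¹ : ℝ) : ℂ)) * D *
    Matrix.diagonal (fun i => (((Real.sqrt (degD D i))⁻¹ : ℝ) : ℂ))

open Finset

section OpNorm

variable {ι : Type*} [Fintype ι] [DecidableEq ι]

lemma opNorm_eq (M : Matrix ι ι ℂ) : opNorm M = ‖Matrix.toEuclideanCLM (𝕜 := ℂ) M‖ := by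
  unfold opNorm
  congr!

lemma opNorm_nonneg (M : Matrix ι ι ℂ) : 0 ≤ opNorm M := by
  rw [opNorm_eq]
  exact norm_nonneg _

lemma opNorm_mul_le (A B : Matrix ι ι ℂ) : opNorm (A * B) ≤ opNorm A * opNorm B := by
  simp only [opNorm_eq, map_mul]
  exact norm_mul_le _ _

lemma opNorm_smul (c : ℂ) (M : Matrix ι ι ℂ) : opNorm (c • M) = ‖c‖ * opNorm M := by
  simp only [opNorm_eq, map_smul]
  exact norm_smul c _

lemma opNorm_le_of_sum_sq_le {M : Matrix ι ι ℂ} {C : ℝ} (hC : 0 ≤ C)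
    (h : ∀ x : ι → ℂ, ∑ u, ‖∑ v, M u v * x v‖ ^ 2 ≤ C ^ 2 * ∑ v, ‖x v‖ ^ 2) :
    opNorm M ≤ C := by
  rw [opNorm_eq]
  refine ContinuousLinearMap.opNorm_le_bound _ hC fun x => ?_
  have happly : ∀ u, Matrix.toEuclideanCLM (𝕜 := ℂ) M x u = ∑ v, M u v * x v := fun u =>
    (congrFun (Matrix.ofLp_toEuclideanCLM (𝕜 := ℂ) M x) u).trans (by simp [Matrix.mulVec, dotProduct])
  refine le_of_pow_le_pow_left₀ two_ne_zero (by positivity) ?_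
  rw [mul_pow, EuclideanSpace.norm_sq_eq, EuclideanSpace.norm_sq_eq]
  simpa only [happly] using h x

lemma opNorm_le_of_schur (M : Matrix ι ι ℂ) {C : ℝ} (hC : 0 ≤ C) (p : ι → ℝ)
    (hp : ∀ u, 0 < p u) (hrow : ∀ u, ∑ v, ‖M u v‖ * p v ≤ C * p u)
    (hcol : ∀ v, ∑ u, ‖M u v‖ * p u ≤ C * p v) : opNorm M ≤ C := by
  refine opNorm_le_of_sum_sq_le hC fun x => ?_
  have hrow_sq : ∀ u, ‖∑ v, M u v * x v‖ ^ 2 ≤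
      C * p u * ∑ v, ‖M u v‖ * (‖x v‖ ^ 2 / p v) := by
    intro u
    calc ‖∑ v, M u v * x v‖ ^ 2 ≤ (∑ v, ‖M u v‖ * ‖x v‖) ^ 2 := by
          gcongr
          exact (norm_sum_le _ _).trans_eq (by simp only [norm_mul])
      _ ≤ (∑ v, ‖M u v‖ * p v) * ∑ v, ‖M u v‖ * (‖x v‖ ^ 2 / p v) := by
          refine sum_sq_le_sum_mul_sum_of_sq_le_mul _ (fun v _ => ?_) (fun v _ => ?_)
            fun v _ => le_of_eq ?_
          · have := hp v; positivity
          · have := hp v; positivity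
          · have := (hp v).ne'; field_simp
      _ ≤ C * p u * ∑ v, ‖M u v‖ * (‖x v‖ ^ 2 / p v) := by
          gcongr
          · exact sum_nonneg fun v _ => by have := hp v; positivity
          · exact hrow u
  calc ∑ u, ‖∑ v, M u v * x v‖ ^ 2
      ≤ ∑ u, C * p u * ∑ v, ‖M u v‖ * (‖x v‖ ^ 2 / p v) := sum_le_sum fun u _ => hrow_sq u
    _ = C * ∑ v, ‖x v‖ ^ 2 / p v * ∑ u, ‖M u v‖ * p u := by
        simp only [mul_sum]
        rw [sum_comm]
        exact sum_congr rfl fun v _ => sum_congr rfl fun u _ => by ring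
    _ ≤ C * ∑ v, ‖x v‖ ^ 2 / p v * (C * p v) := by
        gcongr with v
        · have := hp v; positivity
        · exact hcol v
    _ = C ^ 2 * ∑ v, ‖x v‖ ^ 2 := by
        simp only [mul_sum]
        exact sum_congr rfl fun v _ => by have := (hp v).ne'; field_simp

lemma opNorm_diagonal_le (d : ι → ℂ) {C : ℝ} (hC : 0 ≤ C) (h : ∀ u, ‖d u‖ ≤ C) :
    opNorm (Matrix.diagonal d) ≤ C := by
  refine opNorm_le_of_sum_sq_le hC fun x => ?_
  simp only [Matrix.diagonal_apply, ite_mul, zero_mul, sum_ite_eq, mem_univ, if_true, mul_sum]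
  gcongr with u
  rw [norm_mul, mul_pow]
  gcongr
  exact h u

end OpNorm

section NcDist

variable {ι : Type*} [Fintype ι]

lemma commD_apply (X : Matrix ι ι ℂ) (a : ι → ℂ) (u v : ι) :
    commD X a u v = X u v * (a v - a u) := by
  simp only [commD, Matrix.sub_apply, Matrix.mul_diagonal, Matrix.diagonal_mul]
  ring

lemma commD_smul [DecidableEq ι] (X : Matrix ι ι ℂ) (c : ℂ) (a : ι → ℂ) : commD X (c • a) = c • commD X a := by
  ext u v
  simp only [commD_apply, Matrix.smul_apply, Pi.smul_apply, smul_eq_mul]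
  ring

lemma le_ncDist {X : Matrix ι ι ℂ} {a : ι → ℂ} (ha : opNorm (commD X a) ≤ 1) (i j : ι) :
    ENNReal.ofReal ‖a i - a j‖ ≤ ncDist X i j :=
  le_iSup₂ (f := fun (a : ι → ℂ) (_ : opNorm (commD X a) ≤ 1) => ENNReal.ofReal ‖a i - a j‖) a ha

lemma ncDist_self (X : Matrix ι ι ℂ) (i : ι) : ncDist X i i = 0 :=
  nonpos_iff_eq_zero.mp <| iSup₂_le fun a _ => by simp

lemma ncDist_le_mul_ncDist [DecidableEq ι] {X Y : Matrix ι ι ℂ} {C : ℝ} (hC : 0 < C)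
    (h : ∀ a, opNorm (commD Y a) ≤ C * opNorm (commD X a)) (i j : ι) :
    ncDist X i j ≤ ENNReal.ofReal C * ncDist Y i j := by
  refine iSup₂_le fun a ha => ?_
  set c : ℂ := (C : ℂ)⁻¹
  have hc : ‖c‖ = C⁻¹ := by simp [c, hC.le]
  have hca : opNorm (commD Y (c • a)) ≤ 1 := by
    rw [commD_smul, opNorm_smul, hc, inv_mul_le_iff₀ hC, mul_one]
    exact (h a).trans (mul_le_of_le_one_right hC.le ha)
  calc ENNReal.ofReal ‖a i - a j‖ = ENNReal.ofReal C * ENNReal.ofReal ‖(c • a) i - (c • a) j‖ := by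
        rw [← ENNReal.ofReal_mul hC.le, Pi.smul_apply, Pi.smul_apply, ← smul_sub, norm_smul, hc,
          mul_inv_cancel_left₀ hC.ne']
    _ ≤ ENNReal.ofReal C * ncDist Y i j := by gcongr; exact le_ncDist hca i j

end NcDist

section Walks

variable {ι : Type*} {D : Matrix ι ι ℂ}

lemma Adjac.symm (hD : D.IsHermitian) {u v : ι} (h : Adjac D u v) : Adjac D v u :=
  ⟨h.1.symm, fun h0 => h.2 (by rw [← hD.apply u v, h0, star_zero])⟩

lemma Matrix.IsHermitian.norm_apply_comm (hD : D.IsHermitian) (u v : ι) : ‖D v u‖ = ‖D u v‖ := by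
  rw [← hD.apply u v, norm_star]

lemma eWeight_ne_top {u v : ι} (h : D u v ≠ 0) : eWeight D u v ≠ ∞ := by
  simpa [eWeight] using h

lemma eWeight_toReal (u v : ι) : (eWeight D u v).toReal = ‖D u v‖⁻¹ := by
  rw [eWeight, ENNReal.toReal_inv, ENNReal.toReal_ofReal (norm_nonneg _)]

lemma gDist_le_walkLength {i j : ι} {p : List ι} (h : IsWalk D i j p) :
    gDist D i j ≤ walkLength D i p :=
  iInf₂_le p h

lemma gDist_self (i : ι) : gDist D i i = 0 :=
  nonpos_iff_eq_zero.mp (gDist_le_walkLength (p := []) ⟨.singleton i, rfl⟩)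

lemma walkLength_append_singleton (w : ι) : ∀ (p : List ι) (u : ι),
    walkLength D u (p ++ [w]) =
      walkLength D u p + eWeight D ((u :: p).getLast (List.cons_ne_nil _ _)) w
  | [], u => by simp [walkLength]
  | v :: rest, u => by
    rw [List.cons_append, walkLength, walkLength_append_singleton w rest v, walkLength,
      add_assoc, List.getLast_cons_cons]

lemma IsWalk.append_singleton {i u v : ι} {p : List ι} (h : IsWalk D i u p)
    (huv : Adjac D u v) : IsWalk D i v (p ++ [v]) := by
  obtain ⟨hchain, rfl⟩ := h
  refine ⟨show List.IsChain (Adjac D) ((i :: p) ++ [_]) from hchain.append (.singleton _) ?_,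
    by simp⟩
  simpa [List.getLast?_eq_some_getLast (List.cons_ne_nil i p)] using huv

lemma gDist_le_add_eWeight {i u v : ι} (huv : Adjac D u v) :
    gDist D i v ≤ gDist D i u + eWeight D u v := by
  unfold gDist
  rw [ENNReal.iInf_add]
  refine le_iInf fun p => ?_
  rw [ENNReal.iInf_add]
  refine le_iInf fun hp => ?_
  refine (gDist_le_walkLength (hp.append_singleton huv)).trans_eq ?_
  rw [walkLength_append_singleton, hp.2]

lemma walkLength_ne_top : ∀ {u : ι} {p : List ι}, List.IsChain (Adjac D) (u :: p) →
    walkLength D u p ≠ ∞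
  | _, [], _ => by simp [walkLength]
  | _, _ :: _, .cons_cons huv hrest =>
    ENNReal.add_ne_top.mpr ⟨eWeight_ne_top huv.2, walkLength_ne_top hrest⟩

lemma gDist_ne_top {i j : ι} (h : Conn D i j) : gDist D i j ≠ ∞ := by
  obtain ⟨p, hp⟩ := h
  exact ne_top_of_le_ne_top (walkLength_ne_top hp.1) (gDist_le_walkLength hp)

lemma abs_toReal_gDist_sub_le (hD : D.IsHermitian) {i u v : ι} (hu : Conn D i u)
    (hv : Conn D i v) (huv : Adjac D u v) :
    |(gDist D i v).toReal - (gDist D i u).toReal| ≤ ‖D u v‖⁻¹ := by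
  have hvu := huv.symm hD
  have h₁ := ENNReal.toReal_le_add (gDist_le_add_eWeight huv) (gDist_ne_top hu)
    (eWeight_ne_top huv.2)
  have h₂ := ENNReal.toReal_le_add (gDist_le_add_eWeight hvu) (gDist_ne_top hv)
    (eWeight_ne_top hvu.2)
  rw [eWeight_toReal] at h₁ h₂
  rw [hD.norm_apply_comm] at h₂
  exact abs_sub_le_iff.mpr ⟨by linarith, by linarith⟩

end Walks

section Degree

variable {n : ℕ} {D : Matrix (Fin n) (Fin n) ℂ}

lemma degD_eq_card (u : Fin n) [DecidablePred (Adjac D u)] :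
    degD D u = #(univ.filter (Adjac D u)) := by
  unfold degD
  congr!

lemma degD_pos_of_conn {u w : Fin n} (h : Conn D u w) (hne : u ≠ w) : 0 < degD D u := by
  classical
  obtain ⟨_ | ⟨v, rest⟩, hchain, hlast⟩ := h
  · exact absurd hlast hne
  · rw [degD_eq_card]
    exact card_pos.mpr ⟨v, mem_filter.mpr ⟨mem_univ _, (List.isChain_cons_cons.mp hchain).1⟩⟩

lemma degD_pos (hconn : ∀ x y, Conn D x y) {i j : Fin n} (hij : i ≠ j) (u : Fin n) :
    0 < degD D u := by
  rcases eq_or_ne u i with rfl | hui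
  · exact degD_pos_of_conn (hconn u j) hij
  · exact degD_pos_of_conn (hconn u i) hui

lemma degD_le_maxDeg (u : Fin n) : degD D u ≤ maxDeg D :=
  le_sup (mem_univ u)

lemma sum_norm_mul_sqrt_degD_le (hdeg : ∀ u, 0 < degD D u) (M : Matrix (Fin n) (Fin n) ℂ)
    (hM0 : ∀ u v, ¬ Adjac D u v → M u v = 0)
    (hM : ∀ u v, Adjac D u v → ‖M u v‖ ≤ (√(degD D u : ℝ))⁻¹ * (√(degD D v : ℝ))⁻¹) (u : Fin n) :
    ∑ v, ‖M u v‖ * √(degD D v : ℝ) ≤ √(degD D u : ℝ) := by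
  classical
  have hsqrt : ∀ v, 0 < √(degD D v : ℝ) := fun v => Real.sqrt_pos.mpr (by exact_mod_cast hdeg v)
  rw [← sum_filter_of_ne (p := Adjac D u) fun v _ h => by_contra fun hv => h (by simp [hM0 u v hv])]
  calc ∑ v ∈ univ.filter (Adjac D u), ‖M u v‖ * √(degD D v : ℝ)
      ≤ ∑ v ∈ univ.filter (Adjac D u), (√(degD D u : ℝ))⁻¹ := by
        refine sum_le_sum fun v hv => ?_
        rw [← le_div_iff₀ (hsqrt v), div_eq_mul_inv]
        exact hM u v (mem_filter.mp hv).2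
    _ = √(degD D u : ℝ) := by
        rw [sum_const, ← degD_eq_card, nsmul_eq_mul, ← div_eq_mul_inv, Real.div_sqrt]

lemma opNorm_le_one_of_norm_le_inv_sqrt_degD (hD : D.IsHermitian) (hdeg : ∀ u, 0 < degD D u)
    (M : Matrix (Fin n) (Fin n) ℂ) (hM0 : ∀ u v, ¬ Adjac D u v → M u v = 0)
    (hM : ∀ u v, Adjac D u v → ‖M u v‖ ≤ (√(degD D u : ℝ))⁻¹ * (√(degD D v : ℝ))⁻¹) :
    opNorm M ≤ 1 := by
  refine opNorm_le_of_schur M zero_le_one _ (fun u => Real.sqrt_pos.mpr (by exact_mod_cast hdeg u))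
    (fun u => (sum_norm_mul_sqrt_degD_le hdeg M hM0 hM u).trans_eq (one_mul _).symm)
    fun v => ?_
  have hMt := sum_norm_mul_sqrt_degD_le hdeg M.transpose (fun u w h => hM0 w u (mt (Adjac.symm hD) h))
    (fun u w h => (hM w u (h.symm hD)).trans_eq (mul_comm _ _)) v
  simpa only [Matrix.transpose_apply, one_mul] using hMt

lemma DDelta_apply (u v : Fin n) :
    DDelta D u v = ((√(degD D u : ℝ))⁻¹ : ℝ) * D u v * ((√(degD D v : ℝ))⁻¹ : ℝ) := by
  rw [DDelta, Matrix.mul_diagonal, Matrix.diagonal_mul]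

lemma opNorm_commD_DDelta_le_one (hD : D.IsHermitian) (hdeg : ∀ u, 0 < degD D u)
    (a : Fin n → ℂ) (ha : ∀ u v, Adjac D u v → ‖a v - a u‖ ≤ ‖D u v‖⁻¹) :
    opNorm (commD (DDelta D) a) ≤ 1 := by
  refine opNorm_le_one_of_norm_le_inv_sqrt_degD hD hdeg _ (fun u v huv => ?_) fun u v huv => ?_
  · rw [commD_apply, DDelta_apply]
    by_cases hne : u = v
    · simp [hne]
    · simp [show D u v = 0 from not_not.mp fun h => huv ⟨hne, h⟩]
  · have hDuv : 0 < ‖D u v‖ := norm_pos_iff.mpr huv.2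
    rw [commD_apply, DDelta_apply, norm_mul, norm_mul, norm_mul, Complex.norm_real,
      Complex.norm_real, Real.norm_of_nonneg (by positivity), Real.norm_of_nonneg (by positivity)]
    calc (√(degD D u : ℝ))⁻¹ * ‖D u v‖ * (√(degD D v : ℝ))⁻¹ * ‖a v - a u‖
        = (√(degD D u : ℝ))⁻¹ * (√(degD D v : ℝ))⁻¹ * (‖D u v‖ * ‖a v - a u‖) := by ring
      _ ≤ (√(degD D u : ℝ))⁻¹ * (√(degD D v : ℝ))⁻¹ * 1 := by
        gcongr
        rw [← le_div_iff₀' hDuv, one_div]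
        exact ha u v huv
      _ = _ := mul_one _

lemma gDist_le_ncDist_DDelta (hD : D.IsHermitian) (hdeg : ∀ u, 0 < degD D u) {i : Fin n}
    (hi : ∀ k, Conn D i k) (j : Fin n) : gDist D i j ≤ ncDist (DDelta D) i j := by
  set f : Fin n → ℂ := fun k => ((gDist D i k).toReal : ℂ)
  have hf : opNorm (commD (DDelta D) f) ≤ 1 := by
    refine opNorm_commD_DDelta_le_one hD hdeg f fun u v huv => ?_
    rw [← Complex.ofReal_sub, Complex.norm_real, Real.norm_eq_abs]
    exact abs_toReal_gDist_sub_le hD (hi u) (hi v) huv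
  refine le_trans (le_of_eq ?_) (le_ncDist hf i j)
  rw [← norm_neg, neg_sub, ← Complex.ofReal_sub, gDist_self, ENNReal.toReal_zero, sub_zero,
    Complex.norm_real, Real.norm_of_nonneg ENNReal.toReal_nonneg,
    ENNReal.ofReal_toReal (gDist_ne_top (hi j))]

lemma commD_eq_sqrt_degD_mul_commD_DDelta_mul (hdeg : ∀ u, 0 < degD D u) (a : Fin n → ℂ) :
    commD D a = Matrix.diagonal (fun u => ((√(degD D u : ℝ) : ℝ) : ℂ)) * commD (DDelta D) a *
      Matrix.diagonal (fun u => ((√(degD D u : ℝ) : ℝ) : ℂ)) := by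
  have hsqrt : ∀ u, ((√(degD D u : ℝ) : ℝ) : ℂ) ≠ 0 := fun u =>
    Complex.ofReal_ne_zero.mpr (Real.sqrt_pos.mpr (by exact_mod_cast hdeg u)).ne'
  ext u v
  rw [Matrix.mul_diagonal, Matrix.diagonal_mul, commD_apply, commD_apply, DDelta_apply,
    Complex.ofReal_inv, Complex.ofReal_inv]
  field_simp [hsqrt u, hsqrt v]

lemma opNorm_commD_le_maxDeg_mul (hdeg : ∀ u, 0 < degD D u) (a : Fin n → ℂ) :
    opNorm (commD D a) ≤ maxDeg D * opNorm (commD (DDelta D) a) := by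
  set S := Matrix.diagonal (fun u => ((√(degD D u : ℝ) : ℝ) : ℂ))
  have hS : opNorm S ≤ √(maxDeg D : ℝ) := by
    refine opNorm_diagonal_le _ (Real.sqrt_nonneg _) fun u => ?_
    rw [Complex.norm_real, Real.norm_of_nonneg (Real.sqrt_nonneg _)]
    exact Real.sqrt_le_sqrt (by exact_mod_cast degD_le_maxDeg u)
  rw [commD_eq_sqrt_degD_mul_commD_DDelta_mul hdeg]
  calc opNorm (S * commD (DDelta D) a * S)
      ≤ opNorm S * opNorm (commD (DDelta D) a) * opNorm S :=
        (opNorm_mul_le _ _).trans (by gcongr; exacts [opNorm_nonneg _, opNorm_mul_le _ _])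
    _ ≤ √(maxDeg D : ℝ) * opNorm (commD (DDelta D) a) * √(maxDeg D : ℝ) := by
        exact mul_le_mul (mul_le_mul_of_nonneg_right hS (opNorm_nonneg _)) hS (opNorm_nonneg _)
          (mul_nonneg (Real.sqrt_nonneg _) (opNorm_nonneg _))
    _ = maxDeg D * opNorm (commD (DDelta D) a) := by
        rw [mul_right_comm, Real.mul_self_sqrt (Nat.cast_nonneg _)]

lemma ncDist_DDelta_le_maxDeg_mul (hdeg : ∀ u, 0 < degD D u) (i j : Fin n) :
    ncDist (DDelta D) i j ≤ maxDeg D * ncDist D i j := by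
  have hmax : (0 : ℝ) < maxDeg D := by exact_mod_cast (hdeg i).trans_le (degD_le_maxDeg i)
  simpa only [ENNReal.ofReal_natCast] using
    ncDist_le_mul_ncDist hmax (opNorm_commD_le_maxDeg_mul hdeg) i j

end Degree

theorem stmt16_general {n : ℕ} (D : Matrix (Fin n) (Fin n) ℂ)
    (hherm : D.IsHermitian)
    (hconn : ∀ x y, Conn D x y) (i j : Fin n) :
    gDist D i j ≤ ncDist (DDelta D) i j ∧
    ncDist (DDelta D) i j ≤ (maxDeg D : ℝ≥0∞) * ncDist D i j ∧
    gDist D i j / (maxDeg D : ℝ≥0∞) ≤ ncDist D i j := by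
  rcases eq_or_ne i j with rfl | hij
  · simp [gDist_self, ncDist_self]
  have hdeg := degD_pos hconn hij
  have hℓ := gDist_le_ncDist_DDelta hherm hdeg (hconn i) j
  have hΔ := ncDist_DDelta_le_maxDeg_mul hdeg i j
  exact ⟨hℓ, hΔ, ENNReal.div_le_of_le_mul ((hℓ.trans hΔ).trans_eq (mul_comm _ _))⟩

theorem stmt16 {n : ℕ} (D : Matrix (Fin n) (Fin n) ℂ)
    (hherm : D.IsHermitian) (hdiag : ∀ i, D i i = 0)
    (hconn : ∀ x y, Conn D x y) (i j : Fin n) :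
    gDist D i j ≤ ncDist (DDelta D) i j ∧
    ncDist (DDelta D) i j ≤ (maxDeg D : ℝ≥0∞) * ncDist D i j ∧
    gDist D i j / (maxDeg D : ℝ≥0∞) ≤ ncDist D i j :=
  stmt16_general D hherm hconn i j
end

section
/- Let b₁, b₂, b₃ ≥ 0 be real numbers and let B ∈ M_4(ℝ) be the matrix with B_{12} = b₁, B_{23} = b₂, B_{34} = b₃, B_{21} = −b₁, B_{32} = −b₂, B_{43} = −b₃ and all other entries 0, and set β = b₁² + b₂² + b₃². Then the operator norm of B (with respect to the Euclidean norm) satisfies ‖B‖ = sqrt( (β + sqrt(β² − 4·b₁²·b₃²)) / 2 ); moreover ‖B‖ ≤ 1 if and only if b₁ ≤ 1, b₃ ≤ 1 and b₂² ≤ (1 − b₁²)(1 − b₃²). -/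
/-!
Write `B` for the matrix and `β = b₁² + b₂² + b₃²`. `B` maps the coordinates `(x₀, x₂)` to
`(y₁, y₃)` by the bidiagonal matrix `[[-b₁, b₂], [0, -b₃]]` and `(x₃, x₁)` to `(y₂, y₀)` by
`[[b₃, -b₂], [0, b₁]]`. Both Gram matrices have trace `β` and determinant `b₁² b₃²`, so
`‖B‖²` is the larger root `μ` of `X² - β X + b₁² b₃²`: the triangle inequality reduces
`‖B x‖² ≤ μ ‖x‖²` to the Rayleigh bound for a real symmetric `2 × 2` matrix, and a real
eigenvector of the first block attains it. Finally `μ ≤ 1` iff `β ≤ 2` and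
`β ≤ 1 + b₁² b₃²`, i.e. iff `1 - b₁²` and `1 - b₃²` are nonnegative with product at least `b₂²`.
-/

open scoped ENNReal

open Real

noncomputable def largerRoot (β γ : ℝ) : ℝ := (β + √(β ^ 2 - 4 * γ)) / 2

theorem sq_largerRoot {β γ : ℝ} (h : 4 * γ ≤ β ^ 2) :
    largerRoot β γ ^ 2 = β * largerRoot β γ - γ := by
  have := sq_sqrt (sub_nonneg.2 h)
  rw [largerRoot]
  linear_combination this / 4

theorem largerRoot_le_iff (β γ t : ℝ) :
    largerRoot β γ ≤ t ↔ β ≤ 2 * t ∧ t * β ≤ t ^ 2 + γ := by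
  rw [largerRoot, div_le_iff₀ two_pos, ← le_sub_iff_add_le', sqrt_le_iff]
  constructor <;> rintro ⟨h, h'⟩ <;> constructor <;> nlinarith

section SymmetricTwoByTwo

/-! `largerRoot (a + c) (a * c - m ^ 2)` is the top eigenvalue of `[[a, m], [m, c]]`. -/

variable (a c m : ℝ)

theorem abs_sub_le_sqrt_discrim : |a - c| ≤ √((a + c) ^ 2 - 4 * (a * c - m ^ 2)) := by
  rw [← sqrt_sq_eq_abs]
  exact sqrt_le_sqrt (by nlinarith [sq_nonneg m])

theorem left_le_largerRoot : a ≤ largerRoot (a + c) (a * c - m ^ 2) := by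
  have := abs_sub_le_sqrt_discrim a c m
  rw [largerRoot]
  linarith [le_abs_self (a - c)]

theorem right_le_largerRoot : c ≤ largerRoot (a + c) (a * c - m ^ 2) := by
  have := abs_sub_le_sqrt_discrim a c m
  rw [largerRoot]
  linarith [neg_abs_le (a - c)]

theorem sub_mul_sub_largerRoot :
    (largerRoot (a + c) (a * c - m ^ 2) - a) * (largerRoot (a + c) (a * c - m ^ 2) - c) =
      m ^ 2 := by
  have hdisc : 4 * (a * c - m ^ 2) ≤ (a + c) ^ 2 := by nlinarith [sq_nonneg (a - c), sq_nonneg m]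
  linear_combination sq_largerRoot hdisc

theorem quadForm_le_largerRoot (u v : ℝ) :
    a * u ^ 2 + 2 * m * u * v + c * v ^ 2 ≤
      largerRoot (a + c) (a * c - m ^ 2) * (u ^ 2 + v ^ 2) := by
  have ha := left_le_largerRoot a c m
  have hc := right_le_largerRoot a c m
  have hμ := sub_mul_sub_largerRoot a c m
  set μ := largerRoot (a + c) (a * c - m ^ 2)
  rcases ha.lt_or_eq with ha | ha
  · have : 0 ≤ (μ - a) * ((μ - a) * u ^ 2 - 2 * m * u * v + (μ - c) * v ^ 2) := by
      nlinarith [sq_nonneg ((μ - a) * u - m * v)]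
    nlinarith [(mul_nonneg_iff_of_pos_left (sub_pos.2 ha)).1 this]
  · obtain rfl : m = 0 := by simpa [← ha] using hμ.symm
    nlinarith [mul_nonneg (sub_nonneg.2 hc) (sq_nonneg v)]

theorem exists_quadForm_eq_largerRoot :
    ∃ u v : ℝ, u ^ 2 + v ^ 2 ≠ 0 ∧
      a * u ^ 2 + 2 * m * u * v + c * v ^ 2 =
        largerRoot (a + c) (a * c - m ^ 2) * (u ^ 2 + v ^ 2) := by
  have hμ := sub_mul_sub_largerRoot a c m
  set μ := largerRoot (a + c) (a * c - m ^ 2)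
  by_cases ha : μ = a
  · obtain rfl : m = 0 := by simpa [ha] using hμ.symm
    exact ⟨1, 0, by norm_num, by rw [ha]; ring⟩
  · refine ⟨m, μ - a, by positivity [sub_ne_zero.2 ha], ?_⟩
    linear_combination (a - μ) * hμ

end SymmetricTwoByTwo

section Bidiagonal

/-! The Gram matrix of `[[p, q], [0, r]]` is `[[p², p q], [p q, q² + r²]]`, of trace
`p² + q² + r²` and determinant `p² r²`. -/

variable {E : Type*} [NormedAddCommGroup E] [NormedSpace ℝ E] {p q r β γ : ℝ}

theorem norm_bidiag_sq_le (hβ : p ^ 2 + q ^ 2 + r ^ 2 = β) (hγ : p ^ 2 * r ^ 2 = γ) (z w : E) :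
    ‖p • z + q • w‖ ^ 2 + ‖r • w‖ ^ 2 ≤ largerRoot β γ * (‖z‖ ^ 2 + ‖w‖ ^ 2) := by
  have hμ : largerRoot (p ^ 2 + (q ^ 2 + r ^ 2)) (p ^ 2 * (q ^ 2 + r ^ 2) - (|p| * |q|) ^ 2) =
      largerRoot β γ := by
    rw [← hβ, ← hγ, mul_pow, sq_abs, sq_abs]
    ring_nf
  have hquad := quadForm_le_largerRoot (p ^ 2) (q ^ 2 + r ^ 2) (|p| * |q|) ‖z‖ ‖w‖
  have htri : ‖p • z + q • w‖ ≤ |p| * ‖z‖ + |q| * ‖w‖ := by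
    simpa only [norm_smul, Real.norm_eq_abs] using norm_add_le (p • z) (q • w)
  rw [hμ] at hquad
  rw [norm_smul, Real.norm_eq_abs, mul_pow, sq_abs]
  nlinarith [pow_le_pow_left₀ (norm_nonneg _) htri 2, sq_abs p, sq_abs q]

theorem exists_bidiag_sq_eq (hβ : p ^ 2 + q ^ 2 + r ^ 2 = β) (hγ : p ^ 2 * r ^ 2 = γ) :
    ∃ u v : ℝ, u ^ 2 + v ^ 2 ≠ 0 ∧
      (p * u + q * v) ^ 2 + (r * v) ^ 2 = largerRoot β γ * (u ^ 2 + v ^ 2) := by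
  obtain ⟨u, v, huv, heq⟩ := exists_quadForm_eq_largerRoot (p ^ 2) (q ^ 2 + r ^ 2) (p * q)
  have hμ : largerRoot (p ^ 2 + (q ^ 2 + r ^ 2)) (p ^ 2 * (q ^ 2 + r ^ 2) - (p * q) ^ 2) =
      largerRoot β γ := by
    rw [← hβ, ← hγ]
    ring_nf
  rw [hμ] at heq
  exact ⟨u, v, huv, by linear_combination heq⟩

end Bidiagonal

theorem ContinuousLinearMap.opNorm_eq_sqrt_of_sq_le {𝕜 E F : Type*} [NontriviallyNormedField 𝕜]
    [NormedAddCommGroup E] [NormedAddCommGroup F] [NormedSpace 𝕜 E] [NormedSpace 𝕜 F]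
    {T : E →L[𝕜] F} {μ : ℝ} (hle : ∀ x, ‖T x‖ ^ 2 ≤ μ * ‖x‖ ^ 2) {w : E} (hw : w ≠ 0)
    (heq : ‖T w‖ ^ 2 = μ * ‖w‖ ^ 2) : ‖T‖ = √μ := by
  have hw : 0 < ‖w‖ := norm_pos_iff.2 hw
  have hμ : 0 ≤ μ := by
    have := sq_nonneg ‖T w‖
    rw [heq] at this
    exact nonneg_of_mul_nonneg_left this (by positivity)
  have hTw : ‖T w‖ = √μ * ‖w‖ := by
    rw [← sqrt_sq (norm_nonneg (T w)), heq, sqrt_mul hμ, sqrt_sq (norm_nonneg w)]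
  refine le_antisymm (T.opNorm_le_bound (sqrt_nonneg μ) fun x => ?_) ?_
  · rw [← pow_le_pow_iff_left₀ (norm_nonneg _) (by positivity) two_ne_zero, mul_pow, sq_sqrt hμ]
    exact hle x
  · exact le_of_mul_le_mul_right (hTw ▸ T.le_opNorm w) hw

theorem opNorm_eq_norm_toEuclideanCLM {ι : Type*} [Fintype ι] [DecidableEq ι]
    (M : Matrix ι ι ℂ) : opNorm M = ‖Matrix.toEuclideanCLM (𝕜 := ℂ) M‖ := by
  unfold opNorm
  congr!

def skewTridiag (b₁ b₂ b₃ : ℝ) : Matrix (Fin 4) (Fin 4) ℂ :=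
  !![0, (b₁ : ℂ), 0, 0;
     (-b₁ : ℝ), 0, (b₂ : ℂ), 0;
     0, (-b₂ : ℝ), 0, (b₃ : ℂ);
     0, 0, (-b₃ : ℝ), 0]

theorem skewTridiag_mulVec (b₁ b₂ b₃ : ℝ) (v : Fin 4 → ℂ) :
    (skewTridiag b₁ b₂ b₃).mulVec v =
      ![b₁ • v 1, (-b₁) • v 0 + b₂ • v 2, (-b₂) • v 1 + b₃ • v 3, (-b₃) • v 2] := by
  ext i
  fin_cases i <;>
    simp [skewTridiag, Matrix.mulVec, dotProduct, Fin.sum_univ_four, Complex.real_smul]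

theorem norm_toEuclideanCLM_skewTridiag_sq (b₁ b₂ b₃ : ℝ) (x : EuclideanSpace ℂ (Fin 4)) :
    ‖Matrix.toEuclideanCLM (𝕜 := ℂ) (skewTridiag b₁ b₂ b₃) x‖ ^ 2 =
      (‖(-b₁) • x 0 + b₂ • x 2‖ ^ 2 + ‖(-b₃) • x 2‖ ^ 2) +
        (‖b₃ • x 3 + (-b₂) • x 1‖ ^ 2 + ‖b₁ • x 1‖ ^ 2) := by
  rw [EuclideanSpace.norm_sq_eq, Fin.sum_univ_four, Matrix.ofLp_toEuclideanCLM, skewTridiag_mulVec,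
    add_comm (b₃ • x 3)]
  simp only [Matrix.cons_val_zero, Matrix.cons_val_one, Matrix.cons_val]
  ring

theorem opNorm_skewTridiag (b₁ b₂ b₃ : ℝ) :
    opNorm (skewTridiag b₁ b₂ b₃) =
      √(largerRoot (b₁ ^ 2 + b₂ ^ 2 + b₃ ^ 2) (b₁ ^ 2 * b₃ ^ 2)) := by
  have hβ : (-b₁) ^ 2 + b₂ ^ 2 + (-b₃) ^ 2 = b₁ ^ 2 + b₂ ^ 2 + b₃ ^ 2 := by ring
  have hγ : (-b₁) ^ 2 * (-b₃) ^ 2 = b₁ ^ 2 * b₃ ^ 2 := by ring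
  obtain ⟨u, v, huv, heq⟩ := exists_bidiag_sq_eq hβ hγ
  set w : EuclideanSpace ℂ (Fin 4) := WithLp.toLp 2 ![(u : ℂ), 0, v, 0]
  have hw : ‖w‖ ^ 2 = u ^ 2 + v ^ 2 := by
    simp [EuclideanSpace.norm_sq_eq, Fin.sum_univ_four, w]
  rw [opNorm_eq_norm_toEuclideanCLM]
  refine ContinuousLinearMap.opNorm_eq_sqrt_of_sq_le (fun x => ?_) (w := w) ?_ ?_
  · have heven := norm_bidiag_sq_le hβ hγ (x 0) (x 2)
    have hodd := norm_bidiag_sq_le (β := b₁ ^ 2 + b₂ ^ 2 + b₃ ^ 2) (γ := b₁ ^ 2 * b₃ ^ 2)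
      (p := b₃) (q := -b₂) (r := b₁) (by ring) (by ring) (x 3) (x 1)
    rw [norm_toEuclideanCLM_skewTridiag_sq, EuclideanSpace.norm_sq_eq, Fin.sum_univ_four]
    linarith
  · intro h
    rw [h, norm_zero] at hw
    exact huv (by simpa using hw.symm)
  · rw [norm_toEuclideanCLM_skewTridiag_sq, hw, ← heq]
    simp only [w, Matrix.cons_val_zero, Matrix.cons_val_one, Matrix.cons_val, smul_zero, add_zero,
      norm_zero, Complex.real_smul, ← Complex.ofReal_mul, ← Complex.ofReal_add, Complex.norm_real,
      Real.norm_eq_abs, sq_abs]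
    ring

theorem largerRoot_skewTridiag_le_one_iff {b₁ b₂ b₃ : ℝ} (h1 : 0 ≤ b₁) (h3 : 0 ≤ b₃) :
    largerRoot (b₁ ^ 2 + b₂ ^ 2 + b₃ ^ 2) (b₁ ^ 2 * b₃ ^ 2) ≤ 1 ↔
      b₁ ≤ 1 ∧ b₃ ≤ 1 ∧ b₂ ^ 2 ≤ (1 - b₁ ^ 2) * (1 - b₃ ^ 2) := by
  rw [largerRoot_le_iff]
  constructor
  · rintro ⟨htr, hdet⟩
    have hsum : 0 ≤ (1 - b₁ ^ 2) + (1 - b₃ ^ 2) := by nlinarith [sq_nonneg b₂]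
    have hprod : 0 ≤ (1 - b₁ ^ 2) * (1 - b₃ ^ 2) := by nlinarith [sq_nonneg b₂]
    have hb₁ : b₁ ^ 2 ≤ 1 := by nlinarith
    have hb₃ : b₃ ^ 2 ≤ 1 := by nlinarith
    exact ⟨(pow_le_one_iff_of_nonneg h1 two_ne_zero).1 hb₁,
      (pow_le_one_iff_of_nonneg h3 two_ne_zero).1 hb₃, by linarith⟩
  · rintro ⟨hb₁, hb₃, hb₂⟩
    have hb₁ : b₁ ^ 2 ≤ 1 := pow_le_one₀ h1 hb₁
    have hb₃ : b₃ ^ 2 ≤ 1 := pow_le_one₀ h3 hb₃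
    constructor <;> nlinarith [mul_nonneg (sq_nonneg b₁) (sq_nonneg b₃)]

theorem stmt19_general (b₁ b₂ b₃ : ℝ) (h1 : 0 ≤ b₁) (h3 : 0 ≤ b₃) :
    (opNorm !![0, (b₁ : ℂ), 0, 0;
               (-b₁ : ℝ), 0, (b₂ : ℂ), 0;
               0, (-b₂ : ℝ), 0, (b₃ : ℂ);
               0, 0, (-b₃ : ℝ), 0] =
      Real.sqrt (((b₁ ^ 2 + b₂ ^ 2 + b₃ ^ 2) +
        Real.sqrt ((b₁ ^ 2 + b₂ ^ 2 + b₃ ^ 2) ^ 2 - 4 * b₁ ^ 2 * b₃ ^ 2)) / 2)) ∧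
    (opNorm !![0, (b₁ : ℂ), 0, 0;
               (-b₁ : ℝ), 0, (b₂ : ℂ), 0;
               0, (-b₂ : ℝ), 0, (b₃ : ℂ);
               0, 0, (-b₃ : ℝ), 0] ≤ 1 ↔
      b₁ ≤ 1 ∧ b₃ ≤ 1 ∧ b₂ ^ 2 ≤ (1 - b₁ ^ 2) * (1 - b₃ ^ 2)) := by
  have hnorm := opNorm_skewTridiag b₁ b₂ b₃
  refine ⟨by rwa [largerRoot, ← mul_assoc] at hnorm, ?_⟩
  change opNorm (skewTridiag b₁ b₂ b₃) ≤ 1 ↔ _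
  rw [hnorm, sqrt_le_one, largerRoot_skewTridiag_le_one_iff h1 h3]

theorem stmt19 (b₁ b₂ b₃ : ℝ) (h1 : 0 ≤ b₁) (h2 : 0 ≤ b₂) (h3 : 0 ≤ b₃) :
    (opNorm !![0, (b₁ : ℂ), 0, 0;
               (-b₁ : ℝ), 0, (b₂ : ℂ), 0;
               0, (-b₂ : ℝ), 0, (b₃ : ℂ);
               0, 0, (-b₃ : ℝ), 0] =
      Real.sqrt (((b₁ ^ 2 + b₂ ^ 2 + b₃ ^ 2) +
        Real.sqrt ((b₁ ^ 2 + b₂ ^ 2 + b₃ ^ 2) ^ 2 - 4 * b₁ ^ 2 * b₃ ^ 2)) / 2)) ∧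
    (opNorm !![0, (b₁ : ℂ), 0, 0;
               (-b₁ : ℝ), 0, (b₂ : ℂ), 0;
               0, (-b₂ : ℝ), 0, (b₃ : ℂ);
               0, 0, (-b₃ : ℝ), 0] ≤ 1 ↔
      b₁ ≤ 1 ∧ b₃ ≤ 1 ∧ b₂ ^ 2 ≤ (1 - b₁ ^ 2) * (1 - b₃ ^ 2)) :=
  stmt19_general b₁ b₂ b₃ h1 h3
end
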